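/- The map that prepends a new minimum element to a permutation (i.e. sends τ of length n−1 to the permutation π of length n with π(1)=1 and π(i+1)=τ(i)+1 for all i) is a bijection between 231-avoiding permutations of length n−1 and 231-avoiding permutations of length n satisfying π(1) < π(2), for n ≥ 2. -/
import Mathlib


def Avoids231 {n : ℕ} (π : Fin n → Fin n) : Prop :=
  ¬ ∃ i j k : Fin n, i < j ∧ j < k ∧ π k < π i ∧ π i < π j

/-- Prepend a new minimum element: π(1) = 1 and π(i+1) = τ(i) + 1. -/
def prependMin {n : ℕ} (τ : Fin n → Fin n) : Fin (n + 1) → Fin (n + 1) :=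
  fun i => Fin.cases 0 (fun j => (τ j).succ) i

lemma prependMin_zero {n : ℕ} (τ : Fin n → Fin n) : prependMin τ 0 = 0 := rfl

lemma prependMin_succ {n : ℕ} (τ : Fin n → Fin n) (j : Fin n) :
    prependMin τ j.succ = (τ j).succ := rfl

lemma prependMin_inj {n : ℕ} {τ : Fin n → Fin n} (hτ : Function.Injective τ) :
    Function.Injective (prependMin τ) := by
  intro a b hab
  induction a using Fin.cases with
  | zero =>
    induction b using Fin.cases with
    | zero => rfl
    | succ b' => simp [prependMin] at hab; exact absurd hab.symm (Fin.succ_ne_zero _)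
  | succ a' =>
    induction b using Fin.cases with
    | zero => simp [prependMin] at hab
    | succ b' =>
      simp only [prependMin_succ] at hab
      exact congrArg Fin.succ (hτ (Fin.succ_injective _ hab))

theorem prependMin_bijOn (n : ℕ) (hn : 1 ≤ n) :
    Set.BijOn prependMin
      {τ : Fin n → Fin n | Function.Bijective τ ∧ Avoids231 τ}
      {π : Fin (n + 1) → Fin (n + 1) | Function.Bijective π ∧ Avoids231 π ∧
        π ⟨0, by omega⟩ < π ⟨1, by omega⟩} := by
  refine ⟨?_, ?_, ?_⟩
  · -- maps to
    rintro τ ⟨hb, ha⟩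
    refine ⟨(Finite.injective_iff_bijective).mp (prependMin_inj hb.injective), ?_, ?_⟩
    · rintro ⟨i, j, k, hij, hjk, h1, h2⟩
      induction i using Fin.cases with
      | zero => exact absurd h1 (by simp [prependMin_zero])
      | succ i' =>
        induction j using Fin.cases with
        | zero => exact absurd hij (by simp)
        | succ j' =>
          induction k using Fin.cases with
          | zero => exact absurd hjk (by simp)
          | succ k' =>
            simp only [prependMin_succ, Fin.succ_lt_succ_iff] at hij hjk h1 h2
            exact ha ⟨i', j', k', hij, hjk, h1, h2⟩
    · have h0 : (⟨0, by omega⟩ : Fin (n+1)) = 0 := rfl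
      have h1 : (⟨1, by omega⟩ : Fin (n+1)) = Fin.succ ⟨0, by omega⟩ := rfl
      rw [h0, h1, prependMin_zero, prependMin_succ]
      exact Fin.succ_pos _
  · -- inj on
    intro τ _ σ _ h
    funext j
    have := congrFun h j.succ
    simp only [prependMin_succ] at this
    exact Fin.succ_injective _ this
  · -- surj on
    rintro π ⟨hb, ha, hlt⟩
    have hπ0 : π 0 = 0 := by
      by_contra h0
      obtain ⟨k, hk⟩ := hb.surjective 0
      have hk0 : k ≠ 0 := by rintro rfl; exact h0 hk
      have hk1 : k ≠ ⟨1, by omega⟩ := by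
        intro h
        rw [h] at hk
        rw [hk] at hlt
        exact absurd hlt (Fin.not_lt_zero _)
      have hkv : 2 ≤ k.val := by
        have := Fin.val_ne_of_ne hk0
        have := Fin.val_ne_of_ne hk1
        simp only [Fin.val_zero] at *
        omega
      have hzero : (⟨0, by omega⟩ : Fin (n+1)) = 0 := rfl
      exact ha ⟨⟨0, by omega⟩, ⟨1, by omega⟩, k, by simp [Fin.lt_def],
        by simp [Fin.lt_def]; omega, by rw [hzero, hk]; exact Fin.pos_of_ne_zero h0, hlt⟩
    have hne : ∀ j : Fin n, π j.succ ≠ 0 := by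
      intro j h
      exact Fin.succ_ne_zero j (hb.injective (h.trans hπ0.symm))
    refine ⟨fun j => (π j.succ).pred (hne j), ⟨?_, ?_⟩, ?_⟩
    · apply Finite.injective_iff_bijective.mp
      intro a b hab
      have : π a.succ = π b.succ := by
        have := congrArg Fin.succ hab
        simpa [Fin.succ_pred] using this
      exact Fin.succ_injective _ (hb.injective this)
    · rintro ⟨i, j, k, hij, hjk, h1, h2⟩
      refine ha ⟨i.succ, j.succ, k.succ, by simpa using hij, by simpa using hjk, ?_, ?_⟩
      · have := Fin.succ_lt_succ_iff.mpr h1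
        simpa [Fin.succ_pred] using this
      · have := Fin.succ_lt_succ_iff.mpr h2
        simpa [Fin.succ_pred] using this
    · funext i
      induction i using Fin.cases with
      | zero => simpa [prependMin_zero] using hπ0.symm
      | succ i' => simp [prependMin_succ, Fin.succ_pred]
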